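/- Let (φ_λ)_{λ∈Λ}, with Λ finite, be an orthonormal basis of ℝ^n, let Λ = ⋃_{a∈K} Λ_a be a partition of Λ into pairwise disjoint nonempty subsets, let Y ∈ ℝ^n, γ > 0 and w_a > 0 for each a ∈ K, and set q_a = γ w_a. Then the following three elements of ℝ^n coincide: (a) the block soft-thresholding estimator Σ_{a∈K} Σ_{λ∈Λ_a} (η₁(P_a Y, q_a))_λ φ_λ with η₁(x, q) = x·max(1 − q/‖x‖₂, 0); (b) the unique minimizer over β ∈ ℝ^n of the adaptive group lasso functional (1/2)‖Y − β‖₂² + γ Σ_{a∈K} w_a ‖P_a β‖₂; (c) the unique solution of: minimize (1/2)‖β‖₂² over β ∈ ℝ^n subject to ‖P_a(Y − β)‖₂ / w_a ≤ γ for every a ∈ K. -/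

import Mathlib

/-!
In the coordinates of `φ` both functionals split into a sum over the blocks, so everything
reduces to one block `y = P_a Y` (here `blockCoeffs φ (Blk a) Y`) and `s = η₁(y, q)`. There
`‖y - s‖ ≤ q` and `⟪y - s, s⟫ = q ‖s‖`, i.e. `y - s` is a subgradient of `q ‖·‖` at `s`. These
two facts give, for every `b`, the lasso inequality with a surplus `½ ‖b - s‖²`, and for every `b`
with `‖y - b‖ ≤ q` the bound `½ ‖s‖² + ½ ‖b - s‖² ≤ ½ ‖b‖²`. Summing over the blocks (Parseval)
turns these surpluses into `½ ‖β - β̂‖²`, which gives optimality and uniqueness at once.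
-/

open Function
open scoped RealInnerProductSpace

section SoftThreshold

variable {E : Type*} [NormedAddCommGroup E] [InnerProductSpace ℝ E]

noncomputable def softThreshold (q : ℝ) (y : E) : E := max (1 - q / ‖y‖) 0 • y

theorem softThreshold_of_norm_le {q : ℝ} {y : E} (h : ‖y‖ ≤ q) : softThreshold q y = 0 := by
  rcases eq_or_ne y 0 with rfl | hy
  · simp [softThreshold]
  · rw [softThreshold, max_eq_right, zero_smul]
    rwa [sub_nonpos, one_le_div (norm_pos_iff.2 hy)]

theorem softThreshold_of_lt_norm {q : ℝ} {y : E} (h : q < ‖y‖) :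
    softThreshold q y = (1 - q / ‖y‖) • y := by
  rcases eq_or_ne y 0 with rfl | hy
  · simp [softThreshold]
  · rw [softThreshold, max_eq_left]
    rw [sub_nonneg, div_le_one (norm_pos_iff.2 hy)]
    exact h.le

theorem sub_softThreshold_of_lt_norm {q : ℝ} {y : E} (h : q < ‖y‖) :
    y - softThreshold q y = (q / ‖y‖) • y := by
  rw [softThreshold_of_lt_norm h, sub_smul, one_smul, sub_sub_cancel]

theorem norm_sub_softThreshold_le {q : ℝ} (hq : 0 ≤ q) (y : E) :
    ‖y - softThreshold q y‖ ≤ q := by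
  rcases le_or_gt ‖y‖ q with h | h
  · rwa [softThreshold_of_norm_le h, sub_zero]
  · have hy : 0 < ‖y‖ := hq.trans_lt h
    rw [sub_softThreshold_of_lt_norm h, norm_smul, Real.norm_of_nonneg (div_nonneg hq hy.le),
      div_mul_cancel₀ _ hy.ne']

theorem inner_sub_softThreshold_self (q : ℝ) (y : E) :
    ⟪y - softThreshold q y, softThreshold q y⟫ = q * ‖softThreshold q y‖ := by
  rcases le_or_gt ‖y‖ q with h | h
  · simp [softThreshold_of_norm_le h]
  rcases eq_or_ne y 0 with rfl | hy
  · simp [softThreshold]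
  have hy : 0 < ‖y‖ := norm_pos_iff.2 hy
  have hc : 0 ≤ 1 - q / ‖y‖ := by rw [sub_nonneg, div_le_one hy]; exact h.le
  rw [sub_softThreshold_of_lt_norm h, softThreshold_of_lt_norm h, real_inner_smul_left,
    real_inner_smul_right, real_inner_self_eq_norm_sq, norm_smul, Real.norm_of_nonneg hc]
  field_simp

theorem lasso_optimality {q : ℝ} {y s : E} (h₁ : ‖y - s‖ ≤ q) (h₂ : ⟪y - s, s⟫ = q * ‖s‖)
    (b : E) :
    1 / 2 * ‖y - s‖ ^ 2 + q * ‖s‖ + 1 / 2 * ‖b - s‖ ^ 2 ≤ 1 / 2 * ‖y - b‖ ^ 2 + q * ‖b‖ := by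
  have hcs : ⟪y - s, b⟫ ≤ q * ‖b‖ :=
    (real_inner_le_norm _ _).trans (mul_le_mul_of_nonneg_right h₁ (norm_nonneg b))
  have hexp : ‖y - b‖ ^ 2 = ‖y - s‖ ^ 2 - 2 * ⟪y - s, b - s⟫ + ‖b - s‖ ^ 2 := by
    rw [← norm_sub_sq_real, sub_sub_sub_cancel_right]
  rw [hexp, inner_sub_right, h₂]
  linarith

theorem dantzig_optimality {q : ℝ} {y s b : E} (h₂ : ⟪y - s, s⟫ = q * ‖s‖)
    (hb : ‖y - b‖ ≤ q) :
    1 / 2 * ‖s‖ ^ 2 + 1 / 2 * ‖b - s‖ ^ 2 ≤ 1 / 2 * ‖b‖ ^ 2 := by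
  have hcs : ⟪y - b, s⟫ ≤ q * ‖s‖ :=
    (real_inner_le_norm _ _).trans (mul_le_mul_of_nonneg_right hb (norm_nonneg s))
  have hexp : ‖b‖ ^ 2 = ‖s‖ ^ 2 + 2 * ⟪s, b - s⟫ + ‖b - s‖ ^ 2 := by
    rw [← norm_add_sq_real, add_sub_cancel]
  have hsplit : ⟪s, b - s⟫ = ⟪y - s, s⟫ - ⟪y - b, s⟫ := by
    rw [← inner_sub_left, sub_sub_sub_cancel_left, real_inner_comm]
  rw [hexp, hsplit, h₂]
  linarith

end SoftThreshold

section Blocks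

variable {E Λ K : Type*} [NormedAddCommGroup E] [InnerProductSpace ℝ E] [Fintype Λ]
  (φ : OrthonormalBasis Λ ℝ E)

noncomputable def blockCoeffs (s : Finset Λ) : E →ₗ[ℝ] EuclideanSpace ℝ s where
  toFun v := WithLp.toLp 2 fun l => ⟪φ l, v⟫
  map_add' u v := by ext l; simp [inner_add_right]
  map_smul' c v := by ext l; simp [inner_smul_right]

@[simp]
theorem blockCoeffs_apply (s : Finset Λ) (v : E) (l : s) : blockCoeffs φ s v l = ⟪φ l, v⟫ :=
  rfl

theorem norm_blockCoeffs_sq (s : Finset Λ) (v : E) :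
    ‖blockCoeffs φ s v‖ ^ 2 = ∑ l ∈ s, ⟪φ l, v⟫ ^ 2 := by
  rw [EuclideanSpace.norm_sq_eq, ← Finset.sum_coe_sort s]
  simp

variable [Fintype K] {Blk : K → Finset Λ}

theorem norm_sq_eq_sum_norm_blockCoeffs_sq (hdisj : Pairwise (Disjoint on Blk))
    (hcover : ∀ l, ∃ a, l ∈ Blk a) (v : E) :
    ‖v‖ ^ 2 = ∑ a, ‖blockCoeffs φ (Blk a) v‖ ^ 2 := by
  classical
  have huniv : Finset.univ.biUnion Blk = Finset.univ :=
    Finset.eq_univ_of_forall fun l => by simpa using hcover l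
  simp_rw [norm_blockCoeffs_sq, ← Finset.sum_biUnion (hdisj.set_pairwise _), huniv,
    φ.sum_sq_inner_right]

theorem blockCoeffs_sum_smul (hdisj : Pairwise (Disjoint on Blk)) (c : K → ℝ) (y : E) (a : K) :
    blockCoeffs φ (Blk a) (∑ a', ∑ l ∈ Blk a', (⟪φ l, y⟫ * c a') • φ l) =
      c a • blockCoeffs φ (Blk a) y := by
  ext ⟨l, hl⟩
  simp only [blockCoeffs_apply, PiLp.smul_apply, smul_eq_mul]
  rw [inner_sum, Finset.sum_eq_single a]
  · rw [φ.orthonormal.inner_right_sum (fun l => ⟪φ l, y⟫ * c a) hl, mul_comm]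
  · intro a' _ ha'
    have hl' : l ∉ Blk a' := Finset.disjoint_left.1 (hdisj ha'.symm) hl
    rw [inner_sum]
    refine Finset.sum_eq_zero fun l' hl'' => ?_
    rw [real_inner_smul_right, φ.orthonormal.inner_eq_zero (ne_of_mem_of_not_mem hl'' hl').symm,
      mul_zero]
  · simp

theorem sum_norm_blockCoeffs_sub_sq_pos (hdisj : Pairwise (Disjoint on Blk))
    (hcover : ∀ l, ∃ a, l ∈ Blk a) {u v : E} (h : u ≠ v) :
    0 < ∑ a, ‖blockCoeffs φ (Blk a) u - blockCoeffs φ (Blk a) v‖ ^ 2 := by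
  have hpos := pow_pos (norm_pos_iff.2 (sub_ne_zero.2 h)) 2
  rw [norm_sq_eq_sum_norm_blockCoeffs_sq φ hdisj hcover] at hpos
  simpa only [map_sub] using hpos

theorem groupLasso_lt_of_blockCoeffs_eq_softThreshold (hdisj : Pairwise (Disjoint on Blk))
    (hcover : ∀ l, ∃ a, l ∈ Blk a) {q : K → ℝ} (hq : ∀ a, 0 ≤ q a) {y s : E}
    (hs : ∀ a, blockCoeffs φ (Blk a) s = softThreshold (q a) (blockCoeffs φ (Blk a) y))
    {β : E} (hβ : β ≠ s) :
    1 / 2 * ‖y - s‖ ^ 2 + ∑ a, q a * ‖blockCoeffs φ (Blk a) s‖ <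
      1 / 2 * ‖y - β‖ ^ 2 + ∑ a, q a * ‖blockCoeffs φ (Blk a) β‖ := by
  set B := fun a => blockCoeffs φ (Blk a)
  have hblock : ∀ a, 1 / 2 * ‖B a y - B a s‖ ^ 2 + q a * ‖B a s‖
      + 1 / 2 * ‖B a β - B a s‖ ^ 2 ≤ 1 / 2 * ‖B a y - B a β‖ ^ 2 + q a * ‖B a β‖ :=
    fun a => hs a ▸ lasso_optimality (norm_sub_softThreshold_le (hq a) _)
      (inner_sub_softThreshold_self _ _) _
  have hsum := Finset.sum_le_sum fun a (_ : a ∈ Finset.univ) => hblock a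
  simp only [Finset.sum_add_distrib, ← Finset.mul_sum] at hsum
  simp only [norm_sq_eq_sum_norm_blockCoeffs_sq φ hdisj hcover (y - _), map_sub]
  linarith [sum_norm_blockCoeffs_sub_sq_pos φ hdisj hcover hβ]

theorem norm_lt_of_blockCoeffs_eq_softThreshold (hdisj : Pairwise (Disjoint on Blk))
    (hcover : ∀ l, ∃ a, l ∈ Blk a) {q : K → ℝ} {y s : E}
    (hs : ∀ a, blockCoeffs φ (Blk a) s = softThreshold (q a) (blockCoeffs φ (Blk a) y))
    {β : E} (hfeas : ∀ a, ‖blockCoeffs φ (Blk a) (y - β)‖ ≤ q a) (hβ : β ≠ s) :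
    ‖s‖ < ‖β‖ := by
  set B := fun a => blockCoeffs φ (Blk a)
  have hblock : ∀ a, 1 / 2 * ‖B a s‖ ^ 2 + 1 / 2 * ‖B a β - B a s‖ ^ 2 ≤ 1 / 2 * ‖B a β‖ ^ 2 :=
    fun a => hs a ▸ dantzig_optimality (inner_sub_softThreshold_self _ _)
      (by simpa only [map_sub] using hfeas a)
  have hsum := Finset.sum_le_sum fun a (_ : a ∈ Finset.univ) => hblock a
  simp only [Finset.sum_add_distrib, ← Finset.mul_sum] at hsum
  refine lt_of_pow_lt_pow_left₀ 2 (norm_nonneg β) ?_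
  rw [norm_sq_eq_sum_norm_blockCoeffs_sq φ hdisj hcover s,
    norm_sq_eq_sum_norm_blockCoeffs_sq φ hdisj hcover β]
  linarith [sum_norm_blockCoeffs_sub_sq_pos φ hdisj hcover hβ]

end Blocks

theorem block_soft_eq_group_lasso_eq_dantzig_general {n : ℕ} {Λ K : Type*} [Fintype Λ] [Fintype K]
    (φ : OrthonormalBasis Λ ℝ (EuclideanSpace ℝ (Fin n)))
    (Blk : K → Finset Λ)
    (hdisj : ∀ a a' : K, a ≠ a' → Disjoint (Blk a) (Blk a'))
    (hcover : ∀ l : Λ, ∃ a : K, l ∈ Blk a)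
    (Y : EuclideanSpace ℝ (Fin n)) (γ : ℝ) (hγ : 0 < γ)
    (w : K → ℝ) (hw : ∀ a, 0 < w a)
    (q : K → ℝ) (hq : ∀ a : K, q a = γ * w a)
    -- `Pnorm a v = ‖P_a v‖₂`, the Euclidean norm of the block of coefficients of `v`
    (Pnorm : K → EuclideanSpace ℝ (Fin n) → ℝ)
    (hPnorm : ∀ (a : K) (v : EuclideanSpace ℝ (Fin n)),
      Pnorm a v = Real.sqrt (∑ l ∈ Blk a, (inner ℝ (φ l) v : ℝ) ^ 2))
    -- (a) the block soft-thresholding estimator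
    (βhat : EuclideanSpace ℝ (Fin n))
    (hβhat : βhat = ∑ a : K, ∑ l ∈ Blk a,
      ((inner ℝ (φ l) Y : ℝ) * max (1 - q a / Pnorm a Y) 0) • φ l) :
    -- (b) it is the unique minimizer of the adaptive group lasso functional
    ((∀ β : EuclideanSpace ℝ (Fin n), β ≠ βhat →
      (1 / 2) * ‖Y - βhat‖ ^ 2 + γ * ∑ a : K, w a * Pnorm a βhat <
      (1 / 2) * ‖Y - β‖ ^ 2 + γ * ∑ a : K, w a * Pnorm a β)) ∧
    -- (c) it is the unique solution of the multiscale Dantzig problem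
    ((∀ a : K, Pnorm a (Y - βhat) / w a ≤ γ) ∧
      ∀ β : EuclideanSpace ℝ (Fin n),
        (∀ a : K, Pnorm a (Y - β) / w a ≤ γ) → β ≠ βhat →
        (1 / 2) * ‖βhat‖ ^ 2 < (1 / 2) * ‖β‖ ^ 2) := by
  have hP : ∀ a v, Pnorm a v = ‖blockCoeffs φ (Blk a) v‖ := fun a v => by
    rw [hPnorm, ← norm_blockCoeffs_sq, Real.sqrt_sq (norm_nonneg _)]
  have hq0 : ∀ a, 0 ≤ q a := fun a => hq a ▸ (mul_pos hγ (hw a)).le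
  have hsoft : ∀ a, blockCoeffs φ (Blk a) βhat =
      softThreshold (q a) (blockCoeffs φ (Blk a) Y) := fun a => by
    rw [hβhat, blockCoeffs_sum_smul φ hdisj, hP]
    rfl
  have hpenalty : ∀ v, γ * ∑ a, w a * Pnorm a v = ∑ a, q a * ‖blockCoeffs φ (Blk a) v‖ :=
    fun v => by simp only [Finset.mul_sum, hq, hP, mul_assoc]
  have hfeas : ∀ a v, Pnorm a (Y - v) / w a ≤ γ ↔ ‖blockCoeffs φ (Blk a) (Y - v)‖ ≤ q a :=
    fun a v => by rw [div_le_iff₀ (hw a), hP, hq]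
  refine ⟨fun β hβ => ?_, fun a => ?_, fun β hβfeas hβ => ?_⟩
  · simpa only [hpenalty] using
      groupLasso_lt_of_blockCoeffs_eq_softThreshold φ hdisj hcover hq0 hsoft hβ
  · rw [hfeas, map_sub, hsoft]
    exact norm_sub_softThreshold_le (hq0 a) _
  · have := norm_lt_of_blockCoeffs_eq_softThreshold φ hdisj hcover hsoft
      (fun a => (hfeas a β).1 (hβfeas a)) hβ
    gcongr

/-- Equivalence of block soft-thresholding, the adaptive group lasso, and the multiscale
Dantzig estimator in the regression case `X = I`: for an orthonormal basis `(φ_λ)_{λ∈Λ}` of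
`ℝ^n`, a partition `Λ = ⋃_{a∈K} Λ_a` into pairwise disjoint nonempty blocks, data `Y`,
`γ > 0`, weights `w_a > 0` and `q_a = γ w_a`, the block soft-thresholding estimator
`β̂ = Σ_a Σ_{λ∈Λ_a} (η₁(P_a Y, q_a))_λ φ_λ` is (b) the unique minimizer of
`β ↦ (1/2)‖Y − β‖₂² + γ Σ_a w_a ‖P_a β‖₂` and (c) the unique solution of:
minimize `(1/2)‖β‖₂²` subject to `‖P_a(Y − β)‖₂ / w_a ≤ γ` for all `a`. -/
theorem block_soft_eq_group_lasso_eq_dantzig {n : ℕ} {Λ K : Type*} [Fintype Λ] [Fintype K]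
    (φ : OrthonormalBasis Λ ℝ (EuclideanSpace ℝ (Fin n)))
    (Blk : K → Finset Λ)
    (hdisj : ∀ a a' : K, a ≠ a' → Disjoint (Blk a) (Blk a'))
    (hne : ∀ a : K, (Blk a).Nonempty)
    (hcover : ∀ l : Λ, ∃ a : K, l ∈ Blk a)
    (Y : EuclideanSpace ℝ (Fin n)) (γ : ℝ) (hγ : 0 < γ)
    (w : K → ℝ) (hw : ∀ a, 0 < w a)
    (q : K → ℝ) (hq : ∀ a : K, q a = γ * w a)
    -- `Pnorm a v = ‖P_a v‖₂`, the Euclidean norm of the block of coefficients of `v`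
    (Pnorm : K → EuclideanSpace ℝ (Fin n) → ℝ)
    (hPnorm : ∀ (a : K) (v : EuclideanSpace ℝ (Fin n)),
      Pnorm a v = Real.sqrt (∑ l ∈ Blk a, (inner ℝ (φ l) v : ℝ) ^ 2))
    -- (a) the block soft-thresholding estimator
    (βhat : EuclideanSpace ℝ (Fin n))
    (hβhat : βhat = ∑ a : K, ∑ l ∈ Blk a,
      ((inner ℝ (φ l) Y : ℝ) * max (1 - q a / Pnorm a Y) 0) • φ l) :
    -- (b) it is the unique minimizer of the adaptive group lasso functional
    ((∀ β : EuclideanSpace ℝ (Fin n), β ≠ βhat →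
      (1 / 2) * ‖Y - βhat‖ ^ 2 + γ * ∑ a : K, w a * Pnorm a βhat <
      (1 / 2) * ‖Y - β‖ ^ 2 + γ * ∑ a : K, w a * Pnorm a β)) ∧
    -- (c) it is the unique solution of the multiscale Dantzig problem
    ((∀ a : K, Pnorm a (Y - βhat) / w a ≤ γ) ∧
      ∀ β : EuclideanSpace ℝ (Fin n),
        (∀ a : K, Pnorm a (Y - β) / w a ≤ γ) → β ≠ βhat →
        (1 / 2) * ‖βhat‖ ^ 2 < (1 / 2) * ‖β‖ ^ 2) :=
  block_soft_eq_group_lasso_eq_dantzig_general φ Blk hdisj hcover Y γ hγ w hw q hq Pnorm hPnorm βhat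
    hβhat
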